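/- For every n ≥ 1, the number of 4-dimensional balanced ballot paths of length 4n whose semisymmetric height is at most 6 equals 2^{n-1}. -/

import Mathlib

/-!
In the difference coordinates `p = x₁ - x₂`, `q = x₂ - x₃`, `r = x₃ - x₄` the ballot condition
reads `p, q, r ≥ 0` and `g₄ = 3p + 4q + 3r`, so a path of height at most 6 stays among the states
with `3p + 4q + 3r ≤ 6`. In this small automaton every step is forced except one: from the
origin the path must go `e₁ e₂ e₃` (the state `p = 2` is admissible but a dead end), and from
`(p, q, r) = (0, 0, 1)` it returns to `(1, 0, 0)` through either `e₁ e₄` or `e₄ e₁`, unless it is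
at its last step. So the valid paths are `e₁ e₂ e₃ (w e₂ e₃)ⁿ⁻¹ e₄` with `w ∈ {e₁ e₄, e₄ e₁}`.
The letter `j : Fin 4` stands for `e_{j+1}`.
-/

open scoped Classical

/-- Number of steps among the first `i` steps of `P` equal to basis vector `j`. -/
def cnt (k n : ℕ) (P : Fin (k*n) → Fin k) (j : Fin k) (i : ℕ) : ℕ :=
  (Finset.univ.filter (fun t : Fin (k*n) => (t : ℕ) < i ∧ P t = j)).card

/-- `P` is a `k`-dimensional balanced ballot path of length `k*n`:
each basis vector appears exactly `n` times, and every partial sum is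
weakly decreasing in coordinates. -/
def IsBBP (k n : ℕ) (P : Fin (k*n) → Fin k) : Prop :=
  (∀ j : Fin k, cnt k n P j (k*n) = n) ∧
  (∀ i ≤ k*n, ∀ j j' : Fin k, j ≤ j' → cnt k n P j' i ≤ cnt k n P j i)

/-- Semisymmetric height `g_k` of the `i`-th intermediate point of `P`. -/
def ptHt (k n : ℕ) (P : Fin (k*n) → Fin k) (i : ℕ) : ℤ :=
  ∑ j : Fin k, ((k : ℤ) - 1 - 2*(j : ℕ)) * (cnt k n P j i)

/-- The semisymmetric height of path `P` is at most `u`. -/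
def HeightLE (k n : ℕ) (P : Fin (k*n) → Fin k) (u : ℤ) : Prop :=
  ∀ i ≤ k*n, ptHt k n P i ≤ u

/-- The semisymmetric height of path `P` is exactly `u`. -/
def HeightEq (k n : ℕ) (P : Fin (k*n) → Fin k) (u : ℤ) : Prop :=
  HeightLE k n P u ∧ ∃ i ≤ k*n, ptHt k n P i = u

section General

variable {k n : ℕ} (P : Fin (k * n) → Fin k)

def pt (i : ℕ) : Fin k → ℕ := fun j => cnt k n P j i

def semisymHt (x : Fin k → ℕ) : ℤ := ∑ j : Fin k, ((k : ℤ) - 1 - 2 * (j : ℕ)) * x j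

def Admissible (u : ℤ) (x : Fin k → ℕ) : Prop := Antitone x ∧ semisymHt x ≤ u

lemma pt_zero : pt P 0 = 0 := by
  funext j; simp [pt, cnt]

lemma cnt_mono (j : Fin k) : Monotone (cnt k n P j) := fun _ _ h =>
  Finset.card_le_card fun t ht => by
    simp only [Finset.mem_filter] at ht ⊢
    exact ⟨ht.1, by omega, ht.2.2⟩

lemma cnt_succ (j : Fin k) {i : ℕ} (hi : i < k * n) :
    cnt k n P j (i + 1) = cnt k n P j i + if P ⟨i, hi⟩ = j then 1 else 0 := by
  have hlt : Finset.univ.filter (fun t : Fin (k * n) => (t : ℕ) < i + 1) =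
      insert ⟨i, hi⟩ (Finset.univ.filter fun t : Fin (k * n) => (t : ℕ) < i) := by
    ext t
    simp only [Order.lt_add_one_iff, Finset.mem_filter, Finset.mem_univ, true_and,
      Finset.mem_insert, Fin.ext_iff]
    omega
  simp only [cnt, ← Finset.filter_filter, hlt, Finset.filter_insert]
  split_ifs <;> simp [Finset.card_insert_of_notMem]

lemma pt_succ {i : ℕ} (hi : i < k * n) : pt P (i + 1) = pt P i + Pi.single (P ⟨i, hi⟩) 1 := by
  funext j
  simp [pt, cnt_succ P j hi, Pi.single_apply, eq_comm]

lemma isBBP_and_heightLE_iff (u : ℤ) :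
    IsBBP k n P ∧ HeightLE k n P u ↔
      (∀ j, pt P (k * n) j = n) ∧ ∀ i ≤ k * n, Admissible u (pt P i) :=
  ⟨fun ⟨⟨htot, hball⟩, hht⟩ => ⟨htot, fun i hi => ⟨fun _ _ h => hball i hi _ _ h, hht i hi⟩⟩,
    fun ⟨htot, hadm⟩ => ⟨⟨htot, fun i hi _ _ h => (hadm i hi).1 h⟩, fun i hi => (hadm i hi).2⟩⟩

end General

lemma admissible_six_iff (x : Fin 4 → ℕ) :
    Admissible 6 x ↔ x 1 ≤ x 0 ∧ x 2 ≤ x 1 ∧ x 3 ≤ x 2 ∧ 3 * x 0 + x 1 ≤ 6 + x 2 + 3 * x 3 := by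
  have hg : semisymHt x = 3 * x 0 + x 1 - x 2 - 3 * x 3 := by
    simp [semisymHt, Fin.sum_univ_four]; ring
  rw [Admissible, Fin.antitone_iff_succ_le, Fin.forall_fin_succ, Fin.forall_fin_succ,
    Fin.forall_fin_one, hg]
  exact ⟨fun ⟨⟨h₁, h₂, h₃⟩, h⟩ => ⟨h₁, h₂, h₃, by omega⟩,
    fun ⟨h₁, h₂, h₃, h⟩ => ⟨⟨h₁, h₂, h₃⟩, by omega⟩⟩

section Transitions

variable {m : ℕ} {l l' : Fin 4}

lemma eq_zero_of_admissible_balanced (h : Admissible 6 (![m, m, m, m] + Pi.single l 1)) :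
    l = 0 := by
  simp only [admissible_six_iff, Pi.add_apply] at h
  fin_cases l <;> simp at h ⊢

lemma eq_one_of_admissible_two_steps (h : Admissible 6 (![m + 1, m, m, m] + Pi.single l 1))
    (h' : Admissible 6 (![m + 1, m, m, m] + Pi.single l 1 + Pi.single l' 1)) : l = 1 := by
  simp only [admissible_six_iff, Pi.add_apply] at h h'
  fin_cases l <;> fin_cases l' <;> simp at h h' ⊢ <;> omega

lemma eq_two_of_admissible (h : Admissible 6 (![m + 1, m + 1, m, m] + Pi.single l 1)) :
    l = 2 := by
  simp only [admissible_six_iff, Pi.add_apply] at h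
  fin_cases l <;> simp at h ⊢
  omega

lemma eq_zero_or_eq_three_of_admissible
    (h : Admissible 6 (![m + 1, m + 1, m + 1, m] + Pi.single l 1)) : l = 0 ∨ l = 3 := by
  simp only [admissible_six_iff, Pi.add_apply] at h
  fin_cases l <;> simp at h ⊢

lemma eq_three_of_admissible (h : Admissible 6 (![m + 2, m + 1, m + 1, m] + Pi.single l 1)) :
    l = 3 := by
  simp only [admissible_six_iff, Pi.add_apply] at h
  fin_cases l <;> simp at h ⊢ <;> omega

end Transitions

lemma eq_zero_or_exists_four_mul_add (i : ℕ) :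
    i = 0 ∨ ∃ m, i = 4 * m + 1 ∨ i = 4 * m + 2 ∨ i = 4 * m + 3 ∨ i = 4 * m + 4 :=
  i.eq_zero_or_pos.imp_right fun _ => ⟨(i - 1) / 4, by omega⟩

section Canonical

variable (E : ℕ → Bool) (m : ℕ)

def letter : ℕ → Fin 4
  | 0 => 0
  | i + 1 =>
    match i % 4 with
    | 0 => 1
    | 1 => 2
    | 2 => if E (i / 4) then 0 else 3
    | _ => if E (i / 4) then 3 else 0

def canonicalPt : ℕ → Fin 4 → ℕ
  | 0 => ![0, 0, 0, 0]
  | i + 1 =>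
    match i % 4 with
    | 0 => ![i / 4 + 1, i / 4, i / 4, i / 4]
    | 1 => ![i / 4 + 1, i / 4 + 1, i / 4, i / 4]
    | 2 => ![i / 4 + 1, i / 4 + 1, i / 4 + 1, i / 4]
    | _ => if E (i / 4) then ![i / 4 + 2, i / 4 + 1, i / 4 + 1, i / 4]
      else ![i / 4 + 1, i / 4 + 1, i / 4 + 1, i / 4 + 1]

@[simp] lemma letter_four_mul_add_one : letter E (4 * m + 1) = 1 := by
  simp [letter]

@[simp] lemma letter_four_mul_add_two : letter E (4 * m + 2) = 2 := by
  simp [letter]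

@[simp] lemma letter_four_mul_add_three : letter E (4 * m + 3) = if E m then 0 else 3 := by
  simp [letter, Nat.mul_add_div]

@[simp] lemma letter_four_mul_add_four : letter E (4 * m + 4) = if E m then 3 else 0 := by
  simp [letter, Nat.mul_add_div]

@[simp] lemma canonicalPt_four_mul_add_one : canonicalPt E (4 * m + 1) = ![m + 1, m, m, m] := by
  simp [canonicalPt]

@[simp] lemma canonicalPt_four_mul_add_two :
    canonicalPt E (4 * m + 2) = ![m + 1, m + 1, m, m] := by
  simp [canonicalPt, Nat.mul_add_div]

@[simp] lemma canonicalPt_four_mul_add_three :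
    canonicalPt E (4 * m + 3) = ![m + 1, m + 1, m + 1, m] := by
  simp [canonicalPt, Nat.mul_add_div]

@[simp] lemma canonicalPt_four_mul_add_four : canonicalPt E (4 * m + 4) =
    if E m then ![m + 2, m + 1, m + 1, m] else ![m + 1, m + 1, m + 1, m + 1] := by
  simp [canonicalPt, Nat.mul_add_div]

lemma canonicalPt_succ (i : ℕ) :
    canonicalPt E (i + 1) = canonicalPt E i + Pi.single (letter E i) 1 := by
  rcases eq_zero_or_exists_four_mul_add i with rfl | ⟨m, rfl | rfl | rfl | rfl⟩
  · funext j; fin_cases j <;> rfl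
  · funext j; fin_cases j <;> simp
  · funext j; fin_cases j <;> simp
  · cases h : E m <;> funext j <;> fin_cases j <;> simp [h]
  · rw [show 4 * m + 4 + 1 = 4 * (m + 1) + 1 by ring, canonicalPt_four_mul_add_one]
    cases h : E m <;> funext j <;> fin_cases j <;> simp [h]

lemma admissible_canonicalPt (i : ℕ) : Admissible 6 (canonicalPt E i) := by
  rw [admissible_six_iff]
  rcases eq_zero_or_exists_four_mul_add i with rfl | ⟨m, rfl | rfl | rfl | rfl⟩
  · simp [canonicalPt]
  · simp; omega
  · simp; omega
  · simp; omega
  · cases h : E m <;> simp [h] <;> omega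

lemma canonicalPt_four_mul {n : ℕ} (hE : E (n - 1) = false) (j : Fin 4) :
    canonicalPt E (4 * n) j = n := by
  rcases n with _ | n
  · fin_cases j <;> rfl
  · simp only [add_tsub_cancel_right] at hE
    fin_cases j <;> simp [Nat.mul_succ, hE]

end Canonical

section Paths

variable {n : ℕ}

noncomputable def choiceSeq (ε : Fin (n - 1) → Bool) : ℕ → Bool :=
  Function.extend Fin.val ε fun _ => false

noncomputable def canonicalPath (ε : Fin (n - 1) → Bool) : Fin (4 * n) → Fin 4 :=
  fun t => letter (choiceSeq ε) t

def choicesOf (P : Fin (4 * n) → Fin 4) : Fin (n - 1) → Bool :=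
  fun m => decide (P ⟨4 * m + 3, by omega⟩ = 0)

lemma choiceSeq_of_lt (ε : Fin (n - 1) → Bool) {m : ℕ} (hm : m < n - 1) :
    choiceSeq ε m = ε ⟨m, hm⟩ :=
  Fin.val_injective.extend_apply ε _ ⟨m, hm⟩

lemma choiceSeq_of_ge (ε : Fin (n - 1) → Bool) {m : ℕ} (hm : n - 1 ≤ m) : choiceSeq ε m = false :=
  Function.extend_apply' _ _ _ fun ⟨⟨_, h⟩, he⟩ => by omega

lemma pt_canonicalPath (ε : Fin (n - 1) → Bool) {i : ℕ} (hi : i ≤ 4 * n) :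
    pt (canonicalPath ε) i = canonicalPt (choiceSeq ε) i := by
  induction i with
  | zero => rw [pt_zero]; funext j; fin_cases j <;> rfl
  | succ i ih => rw [pt_succ _ (by omega), ih (by omega), canonicalPt_succ]; rfl

lemma canonicalPath_valid (ε : Fin (n - 1) → Bool) :
    IsBBP 4 n (canonicalPath ε) ∧ HeightLE 4 n (canonicalPath ε) 6 := by
  refine (isBBP_and_heightLE_iff _ 6).2 ⟨fun j => ?_, fun i hi => ?_⟩
  · rw [pt_canonicalPath ε le_rfl, canonicalPt_four_mul _ (choiceSeq_of_ge ε le_rfl)]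
  · rw [pt_canonicalPath ε hi]
    exact admissible_canonicalPt _ i

lemma choicesOf_canonicalPath (ε : Fin (n - 1) → Bool) : choicesOf (canonicalPath ε) = ε := by
  funext m
  simp only [choicesOf, canonicalPath, letter_four_mul_add_three, choiceSeq_of_lt ε m.isLt]
  cases ε m <;> rfl

lemma letter_eq_three_of_last_block {P : Fin (4 * n) → Fin 4}
    (hP : IsBBP 4 n P ∧ HeightLE 4 n P 6) {m : ℕ} (hi : 4 * m + 3 < 4 * n) (hm : n - 1 ≤ m)
    (hpt : pt P (4 * m + 3) = ![m + 1, m + 1, m + 1, m]) : P ⟨4 * m + 3, hi⟩ = 3 := by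
  obtain ⟨htot, hadm⟩ := (isBBP_and_heightLE_iff P 6).1 hP
  have hnext := hadm _ hi
  rw [pt_succ P hi, hpt] at hnext
  refine (eq_zero_or_eq_three_of_admissible hnext).resolve_left fun h0 => ?_
  have hle : pt P (4 * m + 3 + 1) 0 ≤ pt P (4 * n) 0 := cnt_mono P 0 (by omega)
  rw [pt_succ P hi, hpt, h0, htot] at hle
  simp only [Pi.add_apply, Pi.single_eq_same, Matrix.cons_val_zero] at hle
  omega

lemma letter_eq_of_pt_eq {P : Fin (4 * n) → Fin 4} (hP : IsBBP 4 n P ∧ HeightLE 4 n P 6)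
    {i : ℕ} (hi : i < 4 * n) (hpt : pt P i = canonicalPt (choiceSeq (choicesOf P)) i) :
    P ⟨i, hi⟩ = letter (choiceSeq (choicesOf P)) i := by
  obtain ⟨-, hadm⟩ := (isBBP_and_heightLE_iff P 6).1 hP
  set E := choiceSeq (choicesOf P) with hE
  have hnext : Admissible 6 (canonicalPt E i + Pi.single (P ⟨i, hi⟩) 1) := by
    rw [← hpt, ← pt_succ]
    exact hadm (i + 1) hi
  rcases eq_zero_or_exists_four_mul_add i with rfl | ⟨m, rfl | rfl | rfl | rfl⟩
  · exact eq_zero_of_admissible_balanced (m := 0) hnext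
  · have hnext2 : Admissible 6 (canonicalPt E (4 * m + 1) + Pi.single (P ⟨4 * m + 1, hi⟩) 1
        + Pi.single (P ⟨4 * m + 2, by omega⟩) 1) := by
      rw [← hpt, ← pt_succ, ← pt_succ]
      exact hadm _ (by omega)
    rw [canonicalPt_four_mul_add_one] at hnext hnext2
    rw [letter_four_mul_add_one]
    exact eq_one_of_admissible_two_steps hnext hnext2
  · rw [canonicalPt_four_mul_add_two] at hnext
    rw [letter_four_mul_add_two]
    exact eq_two_of_admissible hnext
  · rw [canonicalPt_four_mul_add_three] at hpt hnext
    rw [letter_four_mul_add_three]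
    rcases lt_or_ge m (n - 1) with hm | hm
    · rw [hE, choiceSeq_of_lt _ hm]
      rcases eq_zero_or_eq_three_of_admissible hnext with h | h <;> simp [choicesOf, h]
    · rw [hE, choiceSeq_of_ge _ hm, if_neg Bool.false_ne_true]
      exact letter_eq_three_of_last_block hP hi hm hpt
  · rw [canonicalPt_four_mul_add_four] at hnext
    rw [letter_four_mul_add_four]
    cases hEm : E m <;> simp only [hEm, if_true, if_false, Bool.false_eq_true] at hnext ⊢
    · exact eq_zero_of_admissible_balanced hnext
    · exact eq_three_of_admissible hnext

lemma pt_eq_canonicalPt {P : Fin (4 * n) → Fin 4} (hP : IsBBP 4 n P ∧ HeightLE 4 n P 6)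
    {i : ℕ} (hi : i ≤ 4 * n) : pt P i = canonicalPt (choiceSeq (choicesOf P)) i := by
  induction i with
  | zero => rw [pt_zero]; funext j; fin_cases j <;> rfl
  | succ i ih =>
    rw [pt_succ P (by omega), ih (by omega), letter_eq_of_pt_eq hP _ (ih (by omega)),
      canonicalPt_succ]

lemma canonicalPath_choicesOf {P : Fin (4 * n) → Fin 4} (hP : IsBBP 4 n P ∧ HeightLE 4 n P 6) :
    canonicalPath (choicesOf P) = P :=
  funext fun t => (letter_eq_of_pt_eq hP t.isLt (pt_eq_canonicalPt hP t.isLt.le)).symm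

noncomputable def validPathEquiv (n : ℕ) :
    (Fin (n - 1) → Bool) ≃ {P : Fin (4 * n) → Fin 4 // IsBBP 4 n P ∧ HeightLE 4 n P 6} where
  toFun ε := ⟨canonicalPath ε, canonicalPath_valid ε⟩
  invFun P := choicesOf P.1
  left_inv := choicesOf_canonicalPath
  right_inv P := Subtype.ext (canonicalPath_choicesOf P.2)

end Paths

theorem stmt11_general (n : ℕ) :
    Nat.card {P : Fin (4*n) → Fin 4 // IsBBP 4 n P ∧ HeightLE 4 n P 6} = 2^(n-1) := by
  rw [← Nat.card_congr (validPathEquiv n)]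
  simp

theorem stmt11 (n : ℕ) (hn : 1 ≤ n) :
    Nat.card {P : Fin (4*n) → Fin 4 // IsBBP 4 n P ∧ HeightLE 4 n P 6} = 2^(n-1) :=
  stmt11_general n
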